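/- Every dyadic rotation of the circle lies in the subgroup generated by the subgroups T_{[r_i,s_i]} whenever the open arcs (r_i,s_i) (1 ≤ i ≤ k, k ≥ 2, dyadic endpoints) cover S¹. That is, {ρ_b : b ∈ ℤ[1/2]} ⊆ ⟨T_{[r_1,s_1]}, …, T_{[r_k,s_k]}⟩. -/

import Mathlib

noncomputable section

/-- A dyadic rational real number. -/
def IsDyadic (x : ℝ) : Prop := ∃ a : ℤ, ∃ n : ℕ, x = (a : ℝ) / 2 ^ n

/-- `f` restricted to `[p,q]` is a Thompson-like map onto `[r,s]`: piecewise linear with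
finitely many breakpoints, all breakpoints dyadic, all slopes integer powers of 2. -/
def ThompsonLike (p q r s : ℝ) (f : ℝ → ℝ) : Prop :=
  f p = r ∧ f q = s ∧
  ∃ n : ℕ, 0 < n ∧ ∃ x : ℕ → ℝ,
    x 0 = p ∧ x n = q ∧
    (∀ i, i < n → x i < x (i + 1)) ∧
    (∀ i, i ≤ n → IsDyadic (x i)) ∧
    (∀ i, i < n → ∃ k : ℤ, ∀ t ∈ Set.Icc (x i) (x (i + 1)),
      f t = f (x i) + (2 : ℝ) ^ k * (t - x i))

/-- Membership in `F_{[p,q]}`, realised as permutations of `ℝ` that are Thompson-like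
self-maps of `[p,q]` and the identity elsewhere. -/
def InF (p q : ℝ) (g : Equiv.Perm ℝ) : Prop :=
  ThompsonLike p q p q g ∧ ∀ x : ℝ, x ∉ Set.Icc p q → g x = x

/-- The circle `S¹ = ℝ/ℤ`. -/
abbrev Circle1 := AddCircle (1 : ℝ)

instance : Fact ((0 : ℝ) < 1) := ⟨one_pos⟩

/-- A dyadic point of the circle. -/
def IsDyadicC (x : Circle1) : Prop := ∃ t : ℝ, IsDyadic t ∧ x = (t : Circle1)

/-- Membership in Thompson's group `T`, realised as permutations of the circle:
piecewise linear with finitely many breakpoints, all breakpoints dyadic (hence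
preserving the dyadic points), and all slopes integer powers of 2. -/
def InT (g : Equiv.Perm Circle1) : Prop :=
  ∃ n : ℕ, 0 < n ∧ ∃ x y : ℕ → ℝ,
    x n = x 0 + 1 ∧
    (∀ i, i < n → x i < x (i + 1)) ∧
    (∀ i, i ≤ n → IsDyadic (x i)) ∧
    (∀ i, i < n → IsDyadic (y i)) ∧
    (∀ i, i < n → ∃ k : ℤ, ∀ t ∈ Set.Icc (x i) (x (i + 1)),
      g ((t : ℝ) : Circle1) = (((y i + (2 : ℝ) ^ k * (t - x i)) : ℝ) : Circle1))

/-- Membership in `T_{[r,s]}`: elements of `T` that fix pointwise the complement of the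
open arc `(r,s)` (arcs described by real lifts with `r < s ≤ r + 1`). -/
def InTArc (r s : ℝ) (g : Equiv.Perm Circle1) : Prop :=
  InT g ∧ ∀ t : ℝ, t ∈ Set.Icc s (r + 1) → g ((t : ℝ) : Circle1) = ((t : ℝ) : Circle1)

/-- The open arc `(r,s)` of the circle, described by real lifts. -/
def openArc (r s : ℝ) : Set Circle1 := {p | ∃ t : ℝ, r < t ∧ t < s ∧ p = (t : Circle1)}

/-- Rotation of the circle by `a`. -/
def rotC (a : ℝ) : Equiv.Perm Circle1 := Equiv.addRight ((a : ℝ) : Circle1)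

/-- The standard generator `x₀` of `F` as a map `[0,1] → [0,1]` (identity off `[0,1]`). -/
def x0fun : ℝ → ℝ := fun t =>
  if t < 0 then t else if t ≤ 1/4 then 2 * t else if t ≤ 1/2 then t + 1/4
    else if t ≤ 1 then t / 2 + 1/2 else t

/-- The standard generator `x₁` of `F` as a map `[0,1] → [0,1]` (identity off `[0,1]`). -/
def x1fun : ℝ → ℝ := fun t =>
  if t ≤ 1/2 then t else if t ≤ 5/8 then 2 * t - 1/2 else if t ≤ 3/4 then t + 1/8
    else if t ≤ 1 then t / 2 + 1/2 else t

/-- The element `ζ` as a map `[0,1] → [0,1]` (identity off `[0,1]`). -/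
def zetaFun : ℝ → ℝ := fun t =>
  if t < 0 then t else if t ≤ 1/4 then 2 * t else if t ≤ 3/4 then t / 2 + 3/8 else t

/-- A lift `[0,1] → [1/2,3/2]` of the order-3 rotation-like element
`α = (0,10,11) ↦ (10,11,0)` of `T`. -/
def alpha3Fun : ℝ → ℝ := fun t =>
  if t ≤ 1/2 then t / 2 + 1/2 else if t ≤ 3/4 then t + 1/4 else 2 * t - 1/2

/-! ### Auxiliary material for `statement9` -/

lemma IsDyadic.add {x y : ℝ} (hx : IsDyadic x) (hy : IsDyadic y) : IsDyadic (x + y) := by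
  obtain ⟨a, n, rfl⟩ := hx; obtain ⟨c, m, rfl⟩ := hy
  refine ⟨a * 2^m + c * 2^n, n + m, ?_⟩
  push_cast
  rw [pow_add]
  try field_simp
  try ring

lemma IsDyadic.neg {x : ℝ} (hx : IsDyadic x) : IsDyadic (-x) := by
  obtain ⟨a, n, rfl⟩ := hx; exact ⟨-a, n, by push_cast; ring⟩

lemma IsDyadic.sub {x y : ℝ} (hx : IsDyadic x) (hy : IsDyadic y) : IsDyadic (x - y) := by
  simpa [sub_eq_add_neg] using hx.add hy.neg

lemma IsDyadic.one : IsDyadic 1 := ⟨1, 0, by norm_num⟩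

namespace S9

set_option maxHeartbeats 2000000

lemma coe_int_eq_zero (m : ℤ) : (((m : ℝ)) : Circle1) = 0 := by
  rw [AddCircle.coe_eq_zero_iff]
  exact ⟨m, by simp⟩

lemma coe_add_int (t : ℝ) (m : ℤ) : ((t + m : ℝ) : Circle1) = (t : Circle1) := by
  rw [AddCircle.coe_add, coe_int_eq_zero, add_zero]

lemma coe_add_one (t : ℝ) : ((t + 1 : ℝ) : Circle1) = (t : Circle1) := by
  simpa using coe_add_int t 1

lemma coe_eq_coe_imp (t u : ℝ) (h : (t : Circle1) = (u : Circle1)) : ∃ m : ℤ, u - t = m := by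
  have := QuotientAddGroup.eq.mp h
  rw [AddSubgroup.mem_zmultiples_iff] at this
  obtain ⟨m, hm⟩ := this
  exact ⟨m, by simpa [neg_add_eq_sub] using hm.symm⟩

lemma mem_Ico_coe (a : ℝ) (x : Circle1) :
    ((AddCircle.equivIco 1 a x : Set.Ico a (a + 1)) : ℝ) ∈ Set.Ico a (a + 1) :=
  (AddCircle.equivIco 1 a x).2

lemma coe_equivIco (a : ℝ) (x : Circle1) :
    (((AddCircle.equivIco 1 a x : Set.Ico a (a + 1)) : ℝ) : Circle1) = x := by
  have := (AddCircle.equivIco 1 a).symm_apply_apply x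
  rwa [AddCircle.equivIco, QuotientAddGroup.equivIcoMod_symm_apply] at this

lemma equivIco_coe {a u : ℝ} (hu : u ∈ Set.Ico a (a + 1)) :
    ((AddCircle.equivIco 1 a (u : Circle1) : Set.Ico a (a + 1)) : ℝ) = u := by
  rw [AddCircle.equivIco, QuotientAddGroup.equivIcoMod_coe]
  exact (toIcoMod_eq_self _).mpr hu

/-- The basic PL "translation by `δ` supported in `(a,b)`" map on `ℝ`. -/
def efun (a b δ : ℝ) : ℝ → ℝ := fun t =>
  if t < a then t else if t ≤ a + δ then 2*t - a else if t ≤ b - 2*δ then t + δ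
  else if t ≤ b then (t + b)/2 else t

/-- The inverse of `efun`. -/
def einv (a b δ : ℝ) : ℝ → ℝ := fun t =>
  if t < a then t else if t ≤ a + 2*δ then (t + a)/2 else if t ≤ b - δ then t - δ
  else if t ≤ b then 2*t - b else t

variable {a b b' δ : ℝ}

lemma einv_efun (hδ : 0 < δ) (h1 : a + 3*δ ≤ b) (t : ℝ) :
    einv a b δ (efun a b δ t) = t := by
  unfold efun einv
  split_ifs <;> linarith

lemma efun_einv (hδ : 0 < δ) (h1 : a + 3*δ ≤ b) (t : ℝ) :
    efun a b δ (einv a b δ t) = t := by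
  unfold efun einv
  split_ifs <;> linarith

lemma efun_mem (hδ : 0 < δ) (h1 : a + 3*δ ≤ b) (h2 : b ≤ a + 1)
    {t : ℝ} (ht : t ∈ Set.Ico a (a + 1)) : efun a b δ t ∈ Set.Ico a (a + 1) := by
  obtain ⟨ht1, ht2⟩ := ht
  unfold efun
  split_ifs <;> constructor <;> linarith

lemma einv_mem (hδ : 0 < δ) (h1 : a + 3*δ ≤ b) (h2 : b ≤ a + 1)
    {t : ℝ} (ht : t ∈ Set.Ico a (a + 1)) : einv a b δ t ∈ Set.Ico a (a + 1) := by
  obtain ⟨ht1, ht2⟩ := ht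
  unfold einv
  split_ifs <;> constructor <;> linarith

/-- `efun` as a permutation of the circle (the identity if the parameters are bad). -/
def ePerm (a b δ : ℝ) : Equiv.Perm Circle1 :=
  if h : 0 < δ ∧ a + 3*δ ≤ b ∧ b ≤ a + 1 then
    { toFun := fun x =>
        ((efun a b δ ((AddCircle.equivIco 1 a x : Set.Ico a (a+1)) : ℝ) : ℝ) : Circle1)
      invFun := fun x =>
        ((einv a b δ ((AddCircle.equivIco 1 a x : Set.Ico a (a+1)) : ℝ) : ℝ) : Circle1)
      left_inv := by
        intro x
        have ht := mem_Ico_coe a x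
        dsimp only
        rw [equivIco_coe (efun_mem h.1 h.2.1 h.2.2 ht), einv_efun h.1 h.2.1, coe_equivIco]
      right_inv := by
        intro x
        have ht := mem_Ico_coe a x
        dsimp only
        rw [equivIco_coe (einv_mem h.1 h.2.1 h.2.2 ht), efun_einv h.1 h.2.1, coe_equivIco] }
  else 1

lemma ePerm_apply (hδ : 0 < δ) (h1 : a + 3*δ ≤ b) (h2 : b ≤ a + 1)
    {t : ℝ} (ht : t ∈ Set.Ico a (a + 1)) :
    ePerm a b δ (t : Circle1) = ((efun a b δ t : ℝ) : Circle1) := by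
  rw [ePerm, dif_pos ⟨hδ, h1, h2⟩]
  show ((efun a b δ _ : ℝ) : Circle1) = _
  rw [equivIco_coe ht]

lemma chainR1 (hδ : 0 < δ) (h1 : a + 3*δ ≤ b) (h2 : b + 2*δ ≤ b') (h3 : b' ≤ a + 1)
    {t : ℝ} (ht : t ∈ Set.Ico a (a+1)) (hc : b - δ ≤ efun a b δ t) :
    efun (b-δ) b' δ (efun a b δ t) = efun a b' δ t := by
  obtain ⟨ht1, ht2⟩ := ht
  unfold efun at *
  split_ifs at * <;> linarith

lemma chainR2 (hδ : 0 < δ) (h1 : a + 3*δ ≤ b) (h2 : b + 2*δ ≤ b') (h3 : b' ≤ a + 1)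
    {t : ℝ} (ht : t ∈ Set.Ico a (a+1)) (hc : efun a b δ t < b - δ) :
    efun a b δ t = efun a b' δ t := by
  obtain ⟨ht1, ht2⟩ := ht
  unfold efun at *
  split_ifs at * <;> linarith

lemma chainR3 (hδ : 0 < δ) (h1 : a + 3*δ ≤ b) (h2 : b + 2*δ ≤ b') (h3 : b' ≤ a + 1)
    {u : ℝ} (hu : u ∈ Set.Ico a (a+1)) (hc : u < b - δ) :
    efun (b-δ) b' δ (u+1) = u+1 := by
  obtain ⟨h4, h5⟩ := hu
  unfold efun
  split_ifs <;> linarith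

lemma wrapR1 (hδ : 0 < δ) (h1 : a + 3*δ ≤ b) (h3 : b ≤ a + 1)
    {t : ℝ} (ht : t ∈ Set.Ico a (a+1)) (hc : b - δ ≤ efun a b δ t) :
    efun (b-δ) (a+1+2*δ) δ (efun a b δ t) = t + δ := by
  obtain ⟨ht1, ht2⟩ := ht
  unfold efun at *
  split_ifs at * <;> linarith

lemma wrapR2 (hδ : 0 < δ) (h1 : a + 3*δ ≤ b) (h3 : b ≤ a + 1)
    {t : ℝ} (ht : t ∈ Set.Ico a (a+1)) (hc : efun a b δ t < b - δ) :
    efun (b-δ) (a+1+2*δ) δ (efun a b δ t + 1) = t + 1 + δ := by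
  obtain ⟨ht1, ht2⟩ := ht
  unfold efun at *
  split_ifs at * <;> linarith

lemma chainP (hδ : 0 < δ) (h1 : a + 3*δ ≤ b) (h2 : b + 2*δ ≤ b') (h3 : b' ≤ a + 1) :
    ePerm (b-δ) b' δ * ePerm a b δ = ePerm a b' δ := by
  apply Equiv.ext; intro z
  obtain ⟨t, ht, hx⟩ : ∃ t, t ∈ Set.Ico a (a+1) ∧ (t : Circle1) = z :=
    ⟨_, mem_Ico_coe a z, coe_equivIco a z⟩
  subst hx
  rw [Equiv.Perm.mul_apply, ePerm_apply hδ h1 (by linarith) ht,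
    ePerm_apply hδ (by linarith) h3 ht]
  set u := efun a b δ t with hu
  have hum : u ∈ Set.Ico a (a+1) := efun_mem hδ h1 (by linarith) ht
  by_cases hc : b - δ ≤ u
  · rw [ePerm_apply hδ (by linarith) (by linarith)
      (Set.mem_Ico.mpr ⟨hc, by linarith [hum.2]⟩)]
    rw [hu, chainR1 hδ h1 h2 h3 ht hc]
  · push_neg at hc
    have e1 : ((u : ℝ) : Circle1) = ((u + 1 : ℝ) : Circle1) := (coe_add_one u).symm
    rw [e1, ePerm_apply hδ (by linarith) (by linarith)
      (Set.mem_Ico.mpr ⟨by linarith [hum.1], by linarith⟩)]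
    rw [chainR3 hδ h1 h2 h3 hum hc, ← e1, hu, chainR2 hδ h1 h2 h3 ht hc]

lemma wrapP (hδ : 0 < δ) (h1 : a + 3*δ ≤ b) (h3 : b ≤ a + 1) :
    rotC δ = ePerm (b-δ) (a+1+2*δ) δ * ePerm a b δ := by
  apply Equiv.ext; intro z
  obtain ⟨t, ht, hx⟩ : ∃ t, t ∈ Set.Ico a (a+1) ∧ (t : Circle1) = z :=
    ⟨_, mem_Ico_coe a z, coe_equivIco a z⟩
  subst hx
  have hrot : rotC δ ((t : ℝ) : Circle1) = ((t + δ : ℝ) : Circle1) := by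
    simp [rotC, AddCircle.coe_add]
  rw [hrot, Equiv.Perm.mul_apply, ePerm_apply hδ h1 h3 ht]
  set u := efun a b δ t with hu
  have hum : u ∈ Set.Ico a (a+1) := efun_mem hδ h1 h3 ht
  by_cases hc : b - δ ≤ u
  · rw [ePerm_apply hδ (by linarith) (by linarith)
      (Set.mem_Ico.mpr ⟨hc, by linarith [hum.2]⟩)]
    rw [hu, wrapR1 hδ h1 h3 ht hc]
  · push_neg at hc
    have e1 : ((u : ℝ) : Circle1) = ((u + 1 : ℝ) : Circle1) := (coe_add_one u).symm
    rw [e1, ePerm_apply hδ (by linarith) (by linarith)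
      (Set.mem_Ico.mpr ⟨by linarith [hum.1], by linarith⟩)]
    rw [hu, wrapR2 hδ h1 h3 ht hc]
    have e2 : ((t + 1 + δ : ℝ) : Circle1) = ((t + δ : ℝ) : Circle1) := by
      have := coe_add_one (t + δ)
      rw [show t + δ + 1 = t + 1 + δ by ring] at this
      exact this
    rw [e2]

lemma rotC_add (u v : ℝ) : rotC u * rotC v = rotC (u + v) := by
  apply Equiv.ext; intro z
  simp [rotC, AddCircle.coe_add, add_assoc]
  rw [add_comm]

lemma rotC_zero : rotC 0 = 1 := by
  apply Equiv.ext; intro z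
  simp [rotC]

lemma rotC_zpow (u : ℝ) (z : ℤ) : rotC ((z : ℝ) * u) = (rotC u) ^ z := by
  induction z using Int.induction_on with
  | zero => simpa using rotC_zero
  | succ n ih =>
    rw [zpow_add_one, ← ih, rotC_add]
    congr 1
    push_cast; ring
  | pred n ih =>
    have hneg : rotC (-u) = (rotC u)⁻¹ := by
      apply eq_inv_of_mul_eq_one_right
      rw [rotC_add]
      simpa using rotC_zero
    rw [zpow_sub_one, ← ih, ← hneg, rotC_add]
    congr 1
    push_cast; ring

lemma not_coe_eq_arc {r s t v : ℝ} (hts : s ≤ t) (htr : t ≤ r + 1) (hv1 : r < v) (hv2 : v < s) :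
    (t : Circle1) ≠ (v : Circle1) := by
  intro h
  obtain ⟨m, hm⟩ := coe_eq_coe_imp t v h
  have h1 : (-1 : ℝ) < m := by linarith
  have h2 : (m : ℝ) < 0 := by linarith
  have h1' : (-1 : ℤ) < m := by exact_mod_cast h1
  have h2' : m < 0 := by exact_mod_cast h2
  omega

lemma inTArc_ePerm {r s : ℝ} (hδ : 0 < δ) (h1 : a + 3*δ < b) (h2 : b < a + 1)
    (hda : IsDyadic a) (hdb : IsDyadic b) (hdδ : IsDyadic δ)
    (m : ℤ) (hma : r < a + m) (hmb : b + m < s) :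
    InTArc r s (ePerm a b δ) := by
  constructor
  · -- InT
    refine ⟨4, by norm_num,
      (fun i => match i with | 0 => a | 1 => a+δ | 2 => b-2*δ | 3 => b | _ => a+1),
      (fun i => match i with | 0 => a | 1 => a+2*δ | 2 => b-δ | _ => b), by norm_num, ?_, ?_, ?_, ?_⟩
    · intro i hi
      interval_cases i <;> simp <;> linarith
    · intro i hi
      interval_cases i <;> simp
      · exact hda
      · exact hda.add hdδ
      · rw [two_mul]; exact hdb.sub (hdδ.add hdδ)
      · exact hdb
      · exact hda.add IsDyadic.one
    · intro i hi
      interval_cases i <;> simp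
      · exact hda
      · rw [two_mul]; exact hda.add (hdδ.add hdδ)
      · exact hdb.sub hdδ
      · exact hdb
    · intro i hi
      interval_cases i
      · refine ⟨1, fun t ht => ?_⟩
        simp only at ht ⊢
        rw [ePerm_apply hδ h1.le h2.le ⟨ht.1, by linarith [ht.2]⟩]
        congr 1
        unfold efun
        split_ifs <;> push_cast <;> linarith [ht.1, ht.2]
      · refine ⟨0, fun t ht => ?_⟩
        simp only at ht ⊢
        rw [ePerm_apply hδ h1.le h2.le ⟨by linarith [ht.1], by linarith [ht.2]⟩]
        congr 1
        unfold efun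
        split_ifs <;> push_cast <;> linarith [ht.1, ht.2]
      · refine ⟨-1, fun t ht => ?_⟩
        simp only at ht ⊢
        rw [ePerm_apply hδ h1.le h2.le ⟨by linarith [ht.1], by linarith [ht.2]⟩]
        congr 1
        unfold efun
        rw [zpow_neg_one]
        split_ifs <;> push_cast <;> linarith [ht.1, ht.2]
      · refine ⟨0, fun t ht => ?_⟩
        simp only at ht ⊢
        rcases eq_or_lt_of_le ht.2 with he | hlt
        · rw [he]
          have e1 : ((a + 1 : ℝ) : Circle1) = ((a : ℝ) : Circle1) := coe_add_one a
          have e2 : (b + (2:ℝ)^(0:ℤ)*(a+1-b)) = a + 1 := by norm_num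
          rw [e2, e1, ePerm_apply hδ h1.le h2.le ⟨le_refl a, by linarith⟩]
          have h3 : efun a b δ a = a := by unfold efun; split_ifs <;> linarith
          rw [h3]
        · rw [ePerm_apply hδ h1.le h2.le ⟨by linarith [ht.1], hlt⟩]
          congr 1
          unfold efun
          split_ifs <;> push_cast <;> linarith [ht.1]
  · -- fixes the complement of the arc
    intro t ht
    set u := ((AddCircle.equivIco 1 a ((t:ℝ) : Circle1) : Set.Ico a (a + 1)) : ℝ) with hu
    have hmem := mem_Ico_coe a ((t:ℝ) : Circle1)
    have hcu : ((u : ℝ) : Circle1) = ((t : ℝ) : Circle1) := coe_equivIco a _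
    rw [← hcu, ePerm_apply hδ h1.le h2.le hmem]
    rcases eq_or_lt_of_le hmem.1 with he | hau
    · have h3 : efun a b δ u = u := by unfold efun; split_ifs <;> linarith
      rw [h3]
    rcases le_or_gt b u with hbu | hub
    · have h3 : efun a b δ u = u := by unfold efun; split_ifs <;> linarith
      rw [h3]
    · exfalso
      have hv1 : r < u + m := by linarith
      have hv2 : u + m < s := by linarith
      have h3 : ((t : ℝ) : Circle1) = ((u + m : ℝ) : Circle1) := by
        rw [coe_add_int u m]; exact hcu.symm
      exact not_coe_eq_arc ht.1 ht.2 hv1 hv2 h3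

end S9

set_option maxHeartbeats 2000000 in
theorem statement9 (k : ℕ) (hk : 2 ≤ k) (r s : Fin k → ℝ)
    (hr : ∀ i, IsDyadic (r i)) (hs : ∀ i, IsDyadic (s i))
    (hrs : ∀ i, r i < s i) (hproper : ∀ i, s i < r i + 1)
    (hcover : (⋃ i, openArc (r i) (s i)) = Set.univ)
    (b : ℝ) (hb : IsDyadic b) :
    rotC b ∈ Subgroup.closure (⋃ i, {g : Equiv.Perm Circle1 | InTArc (r i) (s i) g}) := by
  classical
  obtain ⟨zb, nb, rfl⟩ := hb
  set H := Subgroup.closure (⋃ i, {g : Equiv.Perm Circle1 | InTArc (r i) (s i) g}) with hH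
  -- the open intervals `(r i + m, s i + m)` cover `ℝ`
  have hcovR : ∀ t : ℝ, ∃ p : Fin k × ℤ, t ∈ Set.Ioo (r p.1 + p.2) (s p.1 + p.2) := by
    intro t
    have h1 : ((t : ℝ) : Circle1) ∈ (⋃ i, openArc (r i) (s i)) := by
      rw [hcover]; trivial
    rw [Set.mem_iUnion] at h1
    obtain ⟨i, v, hv1, hv2, hv3⟩ := h1
    obtain ⟨m, hm⟩ := S9.coe_eq_coe_imp t v hv3
    refine ⟨(i, -m), ?_, ?_⟩ <;> push_cast <;> linarith
  obtain ⟨δ₀, hδ₀, hLeb⟩ :=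
    lebesgue_number_lemma_of_metric (isCompact_Icc : IsCompact (Set.Icc (-1:ℝ) 2))
      (fun _ : Fin k × ℤ => isOpen_Ioo) (fun t _ => Set.mem_iUnion.mpr (hcovR t))
  obtain ⟨n0, hn0⟩ := exists_pow_lt_of_lt_one (by positivity : (0:ℝ) < δ₀/16)
      (by norm_num : (1:ℝ)/2 < 1)
  set K : ℕ := n0 + nb + 3 with hK
  set M : ℕ := K + 2 with hM
  set L : ℕ := 2 ^ K with hL
  set δ : ℝ := 1 / 2 ^ M with hδ
  have hδpos : 0 < δ := by positivity
  have hδeq : δ = (1/2 : ℝ) ^ M := by rw [hδ, one_div_pow]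
  have hδn0 : δ ≤ (1/2 : ℝ) ^ n0 := by
    rw [hδeq]
    exact pow_le_pow_of_le_one (by norm_num) (by norm_num) (by omega)
  have h16δ : 16 * δ < δ₀ := by linarith
  have hδ32 : δ ≤ 1/32 := by
    rw [hδeq]
    calc ((1:ℝ)/2) ^ M ≤ (1/2) ^ 5 :=
          pow_le_pow_of_le_one (by norm_num) (by norm_num) (by omega)
      _ = 1/32 := by norm_num
  have hMδ : (2:ℝ) ^ M * δ = 1 := by
    rw [hδ]; field_simp
  have hLpow : (L:ℝ) * (4*δ) = 1 := by
    rw [hL, hδ, hM]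
    push_cast
    rw [pow_add]
    field_simp
    ring
  have hL2 : 2 ≤ L := by
    rw [hL]
    calc 2 = 2^1 := by norm_num
      _ ≤ 2^K := Nat.pow_le_pow_right (by norm_num) (by omega)
  have hdyδ : IsDyadic δ := ⟨1, M, by rw [hδ]; norm_num⟩
  have hdy : ∀ z : ℤ, IsDyadic ((z:ℝ) * δ) := fun z => ⟨z, M, by rw [hδ]; ring⟩
  have factor_mem : ∀ (α β : ℝ), IsDyadic α → IsDyadic β → 0 ≤ α → β ≤ 1 + 2*δ →
      α + 3*δ < β → β - α ≤ 8*δ → β < α + 1 → S9.ePerm α β δ ∈ H := by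
    intro α β hdα hdβ hα0 hβ2 hab hlen hba
    have hαIcc : α ∈ Set.Icc (-1:ℝ) 2 := ⟨by linarith, by linarith⟩
    obtain ⟨p, hp⟩ := hLeb α hαIcc
    have hioo : Set.Icc α β ⊆ Set.Ioo (r p.1 + p.2) (s p.1 + p.2) := by
      refine Set.Subset.trans ?_ hp
      intro u hu
      rw [Metric.mem_ball, Real.dist_eq, abs_of_nonneg (by linarith [hu.1])]
      linarith [hu.2]
    have hαβ : α ≤ β := by linarith
    have hrα : r p.1 + p.2 < α := (hioo ⟨le_refl α, hαβ⟩).1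
    have hβs : β < s p.1 + p.2 := (hioo ⟨hαβ, le_refl β⟩).2
    have hin := S9.inTArc_ePerm (r := r p.1) (s := s p.1) hδpos hab hba hdα hdβ hdyδ (-p.2)
        (by push_cast; linarith) (by push_cast; linarith)
    exact Subgroup.subset_closure (Set.mem_iUnion.mpr ⟨p.1, hin⟩)
  have chain : ∀ j : ℕ, 1 ≤ j → j ≤ L - 1 → S9.ePerm 0 ((j:ℝ)*(4*δ)) δ ∈ H := by
    intro j hj1
    induction j, hj1 using Nat.le_induction with
    | base =>
      intro _
      rw [show (((1:ℕ)):ℝ)*(4*δ) = 4*δ by norm_num]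
      refine factor_mem 0 (4*δ) ⟨0, 0, by norm_num⟩ ?_ le_rfl (by linarith) (by linarith)
        (by linarith) (by linarith)
      have h := hdy 4
      rwa [show ((4:ℤ):ℝ)*δ = 4*δ by norm_num] at h
    | succ n hn ih =>
      intro hn1
      have hmem := ih (by omega)
      have hncast : (1:ℝ) ≤ (n:ℝ) := by exact_mod_cast hn
      have hcast : ((n:ℝ)+1) ≤ (L:ℝ) - 1 := by
        have h1 := (Nat.cast_le (α := ℝ)).mpr hn1
        rwa [Nat.cast_sub (by omega), Nat.cast_add, Nat.cast_one] at h1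
      have hb1 : ((n:ℝ)+1)*(4*δ) ≤ ((L:ℝ)-1)*(4*δ) :=
        mul_le_mul_of_nonneg_right hcast (by positivity)
      have hb2 : ((L:ℝ)-1)*(4*δ) = 1 - 4*δ := by
        rw [sub_mul, hLpow]; ring
      have he1 : ((n:ℝ)+1)*(4*δ) = (n:ℝ)*(4*δ) + 4*δ := by ring
      have hn4 : 4*δ ≤ (n:ℝ)*(4*δ) := by nlinarith
      have hstep := S9.chainP (a := 0) (b := (n:ℝ)*(4*δ)) (b' := ((n:ℝ)+1)*(4*δ)) hδpos
        (by linarith) (by linarith) (by linarith)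
      rw [show (((n+1:ℕ)):ℝ)*(4*δ) = ((n:ℝ)+1)*(4*δ) by push_cast; ring, ← hstep]
      refine mul_mem ?_ hmem
      have hdα : IsDyadic ((n:ℝ)*(4*δ) - δ) := by
        have h := hdy (4*(n:ℤ) - 1)
        rwa [show ((4*(n:ℤ)-1:ℤ):ℝ)*δ = (n:ℝ)*(4*δ) - δ by push_cast; ring] at h
      have hdβ : IsDyadic (((n:ℝ)+1)*(4*δ)) := by
        have h := hdy (4*((n:ℤ)+1))
        rwa [show ((4*((n:ℤ)+1):ℤ):ℝ)*δ = ((n:ℝ)+1)*(4*δ) by push_cast; ring] at h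
      exact factor_mem ((n:ℝ)*(4*δ) - δ) (((n:ℝ)+1)*(4*δ)) hdα hdβ (by linarith)
        (by linarith) (by linarith) (by linarith) (by linarith)
  have hcastL : (((L-1:ℕ)):ℝ) = (L:ℝ) - 1 := by
    rw [Nat.cast_sub (by omega), Nat.cast_one]
  have hGL : S9.ePerm 0 (((L:ℝ)-1)*(4*δ)) δ ∈ H := by
    have h := chain (L-1) (by omega) le_rfl
    rwa [hcastL] at h
  have hb2 : ((L:ℝ)-1)*(4*δ) = 1 - 4*δ := by
    rw [sub_mul, hLpow]; ring
  have hwrap := S9.wrapP (a := 0) (b := ((L:ℝ)-1)*(4*δ)) hδpos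
    (by rw [hb2]; linarith) (by rw [hb2]; linarith)
  have hrotδ : rotC δ ∈ H := by
    rw [hwrap]
    refine mul_mem ?_ hGL
    have hdα : IsDyadic (((L:ℝ)-1)*(4*δ) - δ) := by
      have h := hdy ((2:ℤ)^M - 5)
      rwa [show (((2:ℤ)^M - 5:ℤ):ℝ)*δ = ((L:ℝ)-1)*(4*δ) - δ by
        push_cast; rw [hb2]; linear_combination hMδ] at h
    have hdβ : IsDyadic ((0:ℝ)+1+2*δ) := by
      have h := hdy ((2:ℤ)^M + 2)
      rwa [show (((2:ℤ)^M + 2:ℤ):ℝ)*δ = (0:ℝ)+1+2*δ by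
        push_cast; linear_combination hMδ] at h
    refine factor_mem (((L:ℝ)-1)*(4*δ) - δ) ((0:ℝ)+1+2*δ) hdα hdβ (by rw [hb2]; linarith)
      (by linarith) (by rw [hb2]; linarith) (by rw [hb2]; linarith) (by rw [hb2]; linarith)
  have hfin : rotC ((zb:ℝ)/2^nb) = (rotC δ) ^ ((zb * 2^(n0+5) : ℤ)) := by
    rw [← S9.rotC_zpow]
    congr 1
    rw [hδ, hM, hK]
    push_cast
    field_simp
    ring
  rw [hfin]
  exact Subgroup.zpow_mem H hrotδ _

end
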